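/- arXiv:1709.09273 — 4 statements merged into one kernel-verified Lean document; each statement's English description precedes it below -/
import Mathlib

section
/- Let k₁, k₂, g > 0 be real numbers and let (x₁,x₂,x₃) ∈ ℝ³ with x₁, x₂, x₃ ≥ 0, x₁ + x₂ + x₃ = 1, and f(x₁,x₂,x₃) = (0,0,0). Then either (x₁,x₂,x₃) = (1,0,0), or g·k₁ ≥ 4(g + k₂)² and, with s = Real.sqrt(g·k₁) and γ = Real.sqrt(g·k₁ − 4(g + k₂)²), the point equals ((s − ε·γ)/(2s), g·(s + ε·γ)/(2s(g + k₂)), k₂·(s + ε·γ)/(2s(g + k₂))) for some ε ∈ {1, −1}. In other words, these are the only nonnegative equilibria on the unit simplex. -/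
/-- The autocatalytic CFSTR vector field. -/
def f (k₁ k₂ g : ℝ) (x : ℝ × ℝ × ℝ) : ℝ × ℝ × ℝ :=
  (-k₁ * x.1 * x.2.1 ^ 2 + g - g * x.1,
   k₁ * x.1 * x.2.1 ^ 2 - k₂ * x.2.1 - g * x.2.1,
   k₂ * x.2.1 - g * x.2.2)

/-- The only nonnegative equilibria of the autocatalytic CFSTR system on the unit
simplex are `(1,0,0)` and, when `g·k₁ ≥ 4(g + k₂)²`, the two closed-form points. -/
theorem equilibria_classification (k₁ k₂ g : ℝ) (hk₁ : 0 < k₁) (hk₂ : 0 < k₂) (hg : 0 < g)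
    (x₁ x₂ x₃ : ℝ) (hx₁ : 0 ≤ x₁) (hx₂ : 0 ≤ x₂) (hx₃ : 0 ≤ x₃)
    (hsum : x₁ + x₂ + x₃ = 1) (heq : f k₁ k₂ g (x₁, x₂, x₃) = (0, 0, 0)) :
    (x₁, x₂, x₃) = ((1 : ℝ), (0 : ℝ), (0 : ℝ)) ∨
    (g * k₁ ≥ 4 * (g + k₂) ^ 2 ∧
      ∃ ε : ℝ, (ε = 1 ∨ ε = -1) ∧
        (x₁, x₂, x₃) =
          ((Real.sqrt (g * k₁) - ε * Real.sqrt (g * k₁ - 4 * (g + k₂) ^ 2)) /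
              (2 * Real.sqrt (g * k₁)),
            g * (Real.sqrt (g * k₁) + ε * Real.sqrt (g * k₁ - 4 * (g + k₂) ^ 2)) /
              (2 * Real.sqrt (g * k₁) * (g + k₂)),
            k₂ * (Real.sqrt (g * k₁) + ε * Real.sqrt (g * k₁ - 4 * (g + k₂) ^ 2)) /
              (2 * Real.sqrt (g * k₁) * (g + k₂)))) := by
  simp only [f, Prod.mk.injEq] at heq
  obtain ⟨e1, e2, e3⟩ := heq
  have hA : (0:ℝ) < g + k₂ := by linarith
  rcases eq_or_lt_of_le hx₂ with h0 | h2pos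
  · left
    have hx2 : x₂ = 0 := h0.symm
    subst hx2
    have h1 : x₁ = 1 := by nlinarith
    have h3 : x₃ = 0 := by
      have : g * x₃ = 0 := by linarith
      exact by
        have := mul_eq_zero.mp this
        rcases this with h | h
        · exact absurd h hg.ne'
        · exact h
    simp [h1, h3]
  · right
    set A := g + k₂ with hAdef
    have ha : k₁ * x₁ * x₂ = A := by
      have h : (k₁ * x₁ * x₂) * x₂ = A * x₂ := by ring_nf; linarith [e2]
      exact mul_right_cancel₀ h2pos.ne' h
    have hb : g * x₁ = g - A * x₂ := by
      have := e1; have := e2; simp only [hAdef]; linarith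
    have hq : k₁ * A * x₂ ^ 2 - k₁ * g * x₂ + g * A = 0 := by
      linear_combination (-g) * ha + (k₁ * x₂) * hb
    have hkey : (2 * k₁ * A * x₂ - k₁ * g) ^ 2 = g * k₁ * (g * k₁ - 4 * A ^ 2) := by
      linear_combination (4 * k₁ * A) * hq
    have hgk : (0:ℝ) < g * k₁ := mul_pos hg hk₁
    have hD : (0:ℝ) ≤ g * k₁ - 4 * A ^ 2 := by
      nlinarith [sq_nonneg (2 * k₁ * A * x₂ - k₁ * g)]
    set s := Real.sqrt (g * k₁) with hsdef
    set γ := Real.sqrt (g * k₁ - 4 * A ^ 2) with hgdef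
    have hs : s ^ 2 = g * k₁ := Real.sq_sqrt hgk.le
    have hγ : γ ^ 2 = g * k₁ - 4 * A ^ 2 := Real.sq_sqrt hD
    have hspos : 0 < s := Real.sqrt_pos.mpr hgk
    refine ⟨by linarith, ?_⟩
    have habs : (s * γ - (2 * k₁ * A * x₂ - k₁ * g)) *
        (s * γ + (2 * k₁ * A * x₂ - k₁ * g)) = 0 := by
      have : (s * γ) ^ 2 = (2 * k₁ * A * x₂ - k₁ * g) ^ 2 := by
        rw [mul_pow, hs, hγ]; linear_combination -hkey
      linear_combination this
    have hcases : ∃ ε : ℝ, (ε = 1 ∨ ε = -1) ∧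
        2 * k₁ * A * x₂ = k₁ * g + ε * (s * γ) := by
      rcases mul_eq_zero.mp habs with h | h
      · exact ⟨1, Or.inl rfl, by linarith⟩
      · exact ⟨-1, Or.inr rfl, by linarith⟩
    obtain ⟨ε, hε, hx2eq⟩ := hcases
    refine ⟨ε, hε, ?_⟩
    have h2 : x₂ * (2 * s * A) = g * (s + ε * γ) := by
      refine mul_right_cancel₀ hk₁.ne' ?_
      linear_combination s * hx2eq + (ε * γ) * hs
    have h1 : x₁ * (2 * s) = s - ε * γ := by
      refine mul_right_cancel₀ hg.ne' ?_
      linear_combination (2 * s) * hb - h2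
    have h3 : x₃ * (2 * s * A) = k₂ * (s + ε * γ) := by
      refine mul_right_cancel₀ hg.ne' ?_
      linear_combination k₂ * h2 - (2 * s * A) * e3
    have hden : (2 * s * A) ≠ 0 := by positivity
    have hden2 : (2 * s) ≠ 0 := by positivity
    simp only [Prod.mk.injEq]
    refine ⟨?_, ?_, ?_⟩
    · rw [eq_div_iff hden2]; linear_combination h1
    · rw [eq_div_iff hden]; linear_combination h2
    · rw [eq_div_iff hden]; linear_combination h3
end

section
/- Let k₁, k₂, g > 0 and define the reduced planar vector field fr : ℝ² → ℝ² by fr(x₁,x₂) = (−k₁x₁x₂² + g − gx₁, k₁x₁x₂² − (k₂ + g)x₂). Then the equilibrium (1,0) is locally asymptotically attracting: there exists ε > 0 such that every differentiable curve x : ℝ → ℝ² satisfying x'(t) = fr(x(t)) for all t ≥ 0 and ‖x(0) − (1,0)‖ < ε converges to (1,0), i.e. Tendsto x atTop (𝓝 (1,0)). -/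
open Filter Topology

/-- The reduced planar autocatalytic CFSTR vector field. -/
def fr (k₁ k₂ g : ℝ) (x : ℝ × ℝ) : ℝ × ℝ :=
  (-k₁ * x.1 * x.2 ^ 2 + g - g * x.1,
   k₁ * x.1 * x.2 ^ 2 - (k₂ + g) * x.2)

/-!
The squared distance `W = (x₁ - 1)² + x₂²` to the equilibrium is a strict Lyapunov function near
`(1, 0)`: along the flow `W' = -2g(x₁ - 1)² - 2(k₂ + g)x₂² + 2k₁x₁(x₂ - x₁ + 1)x₂²`, and in a small
enough ball the last, quartic term is dominated by half of the `x₂²` term, so `W' ≤ -c W` with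
`c = min (2g) (k₂ + g)`. This makes the ball `W ≤ δ²` forward invariant, after which `W` decays
like `e^{-ct}`.
-/

open Set Real

section Comparison

variable {W W' : ℝ → ℝ}

theorem le_of_hasDerivAt_neg_at_eq {r : ℝ} (hW : ∀ t, 0 ≤ t → HasDerivAt W (W' t) t)
    (hW0 : W 0 ≤ r) (hboundary : ∀ t, 0 ≤ t → W t = r → W' t < 0) {t : ℝ} (ht : 0 ≤ t) :
    W t ≤ r :=
  image_le_of_deriv_right_lt_deriv_boundary
    (fun s hs => (hW s hs.1).continuousAt.continuousWithinAt)
    (fun s hs => (hW s hs.1).hasDerivWithinAt) hW0 (fun _ => hasDerivAt_const _ r)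
    (fun s hs => hboundary s hs.1) ⟨ht, le_rfl⟩

theorem le_mul_exp_of_hasDerivAt_le_neg_mul {c : ℝ} (hW : ∀ t, 0 ≤ t → HasDerivAt W (W' t) t)
    (hdecay : ∀ t, 0 ≤ t → W' t ≤ -c * W t) {t : ℝ} (ht : 0 ≤ t) :
    W t ≤ W 0 * exp (-c * t) := by
  have hderiv : ∀ s, 0 ≤ s → HasDerivAt (fun s => W s * exp (c * s))
      ((W' s + c * W s) * exp (c * s)) s := fun s hs =>
    ((hW s hs).mul ((hasDerivAt_id s).const_mul c).exp).congr_deriv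
      (by simp only [id, mul_one]; ring)
  have hanti : AntitoneOn (fun s => W s * exp (c * s)) (Ici 0) := by
    refine antitoneOn_of_hasDerivWithinAt_nonpos (convex_Ici 0)
      (fun s hs => (hderiv s hs).continuousAt.continuousWithinAt)
      (fun s hs => (hderiv s (interior_subset hs)).hasDerivWithinAt) fun s hs => ?_
    have := hdecay s (interior_subset hs)
    exact mul_nonpos_of_nonpos_of_nonneg (by linarith) (exp_pos _).le
  have := hanti self_mem_Ici ht ht
  simp only [mul_zero, exp_zero, mul_one] at this
  rw [neg_mul, exp_neg, ← div_eq_mul_inv, le_div_iff₀ (exp_pos _)]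
  exact this

theorem tendsto_zero_of_hasDerivAt_le_neg_mul {c r : ℝ} (hc : 0 < c) (hr : 0 < r)
    (hW_nonneg : ∀ t, 0 ≤ W t) (hW : ∀ t, 0 ≤ t → HasDerivAt W (W' t) t) (hW0 : W 0 ≤ r)
    (hdecay : ∀ t, 0 ≤ t → W t ≤ r → W' t ≤ -c * W t) :
    Tendsto W atTop (𝓝 0) := by
  have hinv : ∀ t, 0 ≤ t → W t ≤ r := fun t ht =>
    le_of_hasDerivAt_neg_at_eq hW hW0
      (fun s hs hWs => (hdecay s hs hWs.le).trans_lt (by rw [hWs]; nlinarith)) ht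
  have hexp : Tendsto (fun t => W 0 * exp (-c * t)) atTop (𝓝 0) := by
    simpa using (tendsto_exp_atBot.comp
      (tendsto_id.const_mul_atTop_of_neg (neg_neg_of_pos hc))).const_mul (W 0)
  refine tendsto_of_tendsto_of_tendsto_of_le_of_le' tendsto_const_nhds hexp
    (Eventually.of_forall hW_nonneg) ?_
  filter_upwards [eventually_ge_atTop 0] with t ht
  exact le_mul_exp_of_hasDerivAt_le_neg_mul hW (fun s hs => hdecay s hs (hinv s hs)) ht

end Comparison

def lyapunov (y : ℝ × ℝ) : ℝ := (y.1 - 1) ^ 2 + y.2 ^ 2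

theorem lyapunov_nonneg (y : ℝ × ℝ) : 0 ≤ lyapunov y := by
  unfold lyapunov; positivity

theorem sq_norm_sub_le_lyapunov (y : ℝ × ℝ) : ‖y - (1, 0)‖ ^ 2 ≤ lyapunov y := by
  have hnorm : ‖y - (1, 0)‖ = max |y.1 - 1| |y.2| := by
    simp only [Prod.norm_def, Prod.fst_sub, Prod.snd_sub, sub_zero, Real.norm_eq_abs]
  unfold lyapunov
  rcases max_choice |y.1 - 1| |y.2| with h | h <;> rw [hnorm, h, sq_abs] <;>
    nlinarith [sq_nonneg (y.1 - 1), sq_nonneg y.2]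

theorem lyapunov_le_two_mul_sq_norm_sub (y : ℝ × ℝ) : lyapunov y ≤ 2 * ‖y - (1, 0)‖ ^ 2 := by
  have h₁ : |y.1 - 1| ≤ ‖y - (1, 0)‖ := norm_fst_le (y - (1, 0))
  have h₂ : |y.2 - 0| ≤ ‖y - (1, 0)‖ := norm_snd_le (y - (1, 0))
  rw [sub_zero] at h₂
  unfold lyapunov
  nlinarith [sq_abs (y.1 - 1), sq_abs y.2, abs_nonneg (y.1 - 1), abs_nonneg y.2]

theorem HasDerivAt.lyapunov_comp {x : ℝ → ℝ × ℝ} {x' : ℝ × ℝ} {t : ℝ} (hx : HasDerivAt x x' t) :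
    HasDerivAt (fun s => lyapunov (x s)) (2 * ((x t).1 - 1) * x'.1 + 2 * (x t).2 * x'.2) t := by
  have h₁ := (((ContinuousLinearMap.fst ℝ ℝ ℝ).hasFDerivAt.comp_hasDerivAt t hx).sub_const 1).pow 2
  have h₂ := ((ContinuousLinearMap.snd ℝ ℝ ℝ).hasFDerivAt.comp_hasDerivAt t hx).pow 2
  exact (h₁.add h₂).congr_deriv (by
    simp only [Function.comp_apply, ContinuousLinearMap.coe_fst', ContinuousLinearMap.coe_snd',
      Nat.cast_ofNat]
    ring)

theorem tendsto_of_lyapunov_tendsto_zero {l : Filter ℝ} {x : ℝ → ℝ × ℝ}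
    (hx : Tendsto (fun t => lyapunov (x t)) l (𝓝 0)) : Tendsto x l (𝓝 (1, 0)) := by
  rw [tendsto_iff_norm_sub_tendsto_zero]
  refine squeeze_zero (fun t => norm_nonneg _) (fun t => ?_) (by simpa using hx.sqrt)
  exact Real.le_sqrt_of_sq_le (sq_norm_sub_le_lyapunov (x t))

theorem lyapunov_deriv_fr_le {k₁ k₂ g δ : ℝ} (hk₁ : 0 ≤ k₁) (hδ₁ : δ ≤ 1)
    (hδ : 8 * k₁ * δ ≤ k₂ + g) {y : ℝ × ℝ} (hy : ‖y - (1, 0)‖ ≤ δ) :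
    2 * (y.1 - 1) * (fr k₁ k₂ g y).1 + 2 * y.2 * (fr k₁ k₂ g y).2 ≤
      -min (2 * g) (k₂ + g) * lyapunov y := by
  have hδ₀ : 0 ≤ δ := (norm_nonneg _).trans hy
  obtain ⟨hu₁, hu₂⟩ := abs_le.mp ((norm_fst_le (y - (1, 0))).trans hy)
  obtain ⟨hv₁, hv₂⟩ := abs_le.mp ((norm_snd_le (y - (1, 0))).trans hy)
  simp only [Prod.fst_sub, Prod.snd_sub, sub_zero] at hu₁ hu₂ hv₁ hv₂
  have hexpand : 2 * (y.1 - 1) * (fr k₁ k₂ g y).1 + 2 * y.2 * (fr k₁ k₂ g y).2 =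
      -2 * g * (y.1 - 1) ^ 2 - 2 * (k₂ + g) * y.2 ^ 2 +
        2 * k₁ * y.1 * (y.2 - y.1 + 1) * y.2 ^ 2 := by
    simp only [fr]; ring
  have hbound : y.1 * (y.2 - y.1 + 1) ≤ 4 * δ := by
    nlinarith [mul_nonneg (by linarith : 0 ≤ y.1) (by linarith : 0 ≤ 2 * δ - (y.2 - y.1 + 1)),
      mul_nonneg hδ₀ (by linarith : 0 ≤ 2 - y.1)]
  have hcross : 2 * k₁ * y.1 * (y.2 - y.1 + 1) ≤ k₂ + g := by
    nlinarith [mul_le_mul_of_nonneg_left hbound hk₁]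
  rw [hexpand]
  unfold lyapunov
  nlinarith [mul_le_mul_of_nonneg_right hcross (sq_nonneg y.2), min_le_left (2 * g) (k₂ + g),
    min_le_right (2 * g) (k₂ + g), sq_nonneg (y.1 - 1), sq_nonneg y.2]

/-- The equilibrium `(1,0)` of the reduced autocatalytic CFSTR system is locally
asymptotically attracting. -/
theorem trivial_equilibrium_locally_attracting (k₁ k₂ g : ℝ)
    (hk₁ : 0 < k₁) (hk₂ : 0 < k₂) (hg : 0 < g) :
    ∃ ε > 0, ∀ x : ℝ → ℝ × ℝ, Differentiable ℝ x →
      (∀ t : ℝ, 0 ≤ t → deriv x t = fr k₁ k₂ g (x t)) →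
      ‖x 0 - ((1 : ℝ), (0 : ℝ))‖ < ε →
      Tendsto x atTop (𝓝 ((1 : ℝ), (0 : ℝ))) := by
  obtain ⟨δ, hδ₀, hδ₁, hδ⟩ : ∃ δ > 0, δ ≤ 1 ∧ 8 * k₁ * δ ≤ k₂ + g :=
    ⟨min 1 ((k₂ + g) / (8 * k₁)), by positivity, min_le_left _ _,
      (le_div_iff₀' (by positivity)).mp (min_le_right _ _)⟩
  refine ⟨δ / 2, by positivity, fun x hx hode hx₀ => tendsto_of_lyapunov_tendsto_zero ?_⟩
  have hx' : ∀ t, 0 ≤ t → HasDerivAt x (fr k₁ k₂ g (x t)) t := fun t ht =>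
    hode t ht ▸ (hx t).hasDerivAt
  refine tendsto_zero_of_hasDerivAt_le_neg_mul (lt_min (by positivity) (by positivity))
    (pow_pos hδ₀ 2) (fun t => lyapunov_nonneg (x t)) (fun t ht => (hx' t ht).lyapunov_comp) ?_
    fun t _ hWt => lyapunov_deriv_fr_le hk₁.le hδ₁ hδ ?_
  · nlinarith [lyapunov_le_two_mul_sq_norm_sub (x 0), norm_nonneg (x 0 - (1, 0))]
  · exact (sq_le_sq₀ (norm_nonneg _) hδ₀.le).mp ((sq_norm_sub_le_lyapunov (x t)).trans hWt)
end

section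
/- Let M be a topological space, F : M → M a map, λ ∈ ℂ with |λ| ≥ 1 and λ ≠ 1, and φ : M → ℂ a continuous function satisfying φ(F x) = λ·φ(x) for all x ∈ M. Let x̂ be a fixed point of F (F x̂ = x̂) and let x ∈ M belong to the stable set of x̂, i.e. Tendsto (fun n => F^[n] x) atTop (𝓝 x̂). Then φ(x) = φ(x̂) = 0. Hence the stable manifold W^s(x̂) = {x : F^[n] x → x̂} is contained in the level set {x : φ(x) = φ(x̂)} of the eigenfunction φ. -/
/-!
At a fixed point `x̂` the eigenrelation reads `φ x̂ = λ φ x̂`, so `φ x̂ = 0` as `λ ≠ 1`. Along an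
orbit converging to `x̂`, continuity gives `λⁿ φ x = φ (Fⁿ x) → φ x̂ = 0`, while
`‖λⁿ φ x‖ ≥ ‖φ x‖` because `‖λ‖ ≥ 1`; hence `φ x = 0` as well.
-/

open Filter Topology

theorem eigenfunction_apply_fixedPt_eq_zero {M M₀ : Type*} [MulZeroOneClass M₀]
    [IsRightCancelMulZero M₀] {F : M → M} {lam : M₀} {φ : M → M₀} (hlam1 : lam ≠ 1)
    (heig : ∀ x, φ (F x) = lam * φ x) {xh : M} (hfix : Function.IsFixedPt F xh) :
    φ xh = 0 := by
  by_contra h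
  exact hlam1 ((mul_eq_right₀ h).1 (hfix ▸ heig xh).symm)

theorem eigenfunction_apply_iterate {M M₀ : Type*} [Monoid M₀] {F : M → M} {lam : M₀}
    {φ : M → M₀} (heig : ∀ x, φ (F x) = lam * φ x) (n : ℕ) (x : M) :
    φ (F^[n] x) = lam ^ n * φ x := by
  have hsemiconj : Function.Semiconj φ F (lam * ·) := heig
  rw [hsemiconj.iterate_right n x, mul_left_iterate]

theorem eq_zero_of_tendsto_pow_mul_zero {𝕜 : Type*} [NormedDivisionRing 𝕜] {lam c : 𝕜}
    (hlam : 1 ≤ ‖lam‖) (h : Tendsto (fun n : ℕ => lam ^ n * c) atTop (𝓝 0)) : c = 0 := by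
  have hge : ∀ n : ℕ, ‖c‖ ≤ ‖lam ^ n * c‖ := fun n => by
    rw [norm_mul, norm_pow]
    exact le_mul_of_one_le_left (norm_nonneg c) (one_le_pow₀ hlam)
  have hle : ‖c‖ ≤ 0 := ge_of_tendsto' (by simpa using h.norm) hge
  exact norm_le_zero_iff.1 hle

/-- A continuous Koopman eigenfunction with eigenvalue of norm at least one (and `≠ 1`)
vanishes on the stable set of a fixed point: the stable manifold `W^s(x̂)` lies in the
level set `{x : φ x = φ x̂}` of the eigenfunction. -/
theorem stable_set_in_level_set {M : Type*} [TopologicalSpace M] (F : M → M)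
    (lam : ℂ) (hlam : 1 ≤ ‖lam‖) (hlam1 : lam ≠ 1)
    (φ : M → ℂ) (hφ : Continuous φ)
    (heig : ∀ x : M, φ (F x) = lam * φ x)
    (xh : M) (hfix : F xh = xh) (x : M)
    (hx : Tendsto (fun n => F^[n] x) atTop (𝓝 xh)) :
    φ x = φ xh ∧ φ xh = 0 := by
  have hxh : φ xh = 0 := eigenfunction_apply_fixedPt_eq_zero hlam1 heig hfix
  have hlim : Tendsto (fun n => lam ^ n * φ x) atTop (𝓝 0) := by
    rw [← hxh]
    simpa only [Function.comp_def, eigenfunction_apply_iterate heig] using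
      (hφ.tendsto xh).comp hx
  have hx0 : φ x = 0 := eq_zero_of_tendsto_pow_mul_zero hlam hlim
  exact ⟨hx0.trans hxh.symm, hxh⟩
end

section
/- Let M be a topological space, F : ℝ → M → M a family of maps (a flow map, F t x being the state reached from x after time t), σ ∈ ℂ with Re σ ≥ 0 and σ ≠ 0, and φ : M → ℂ a continuous function satisfying φ(F t x) = Complex.exp(σ·t)·φ(x) for all t ≥ 0 and all x ∈ M. Let x̂ satisfy F t x̂ = x̂ for all t ≥ 0, and let x ∈ M satisfy Tendsto (fun t => F t x) atTop (𝓝 x̂). Then φ(x) = φ(x̂) = 0. -/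
open Filter Topology

/-! A fixed point `x̂` forces `(e^{σt} - 1) φ(x̂) = 0` for all `t ≥ 0`; since `t ↦ e^{σt}` is not
constant for `σ ≠ 0`, this gives `φ(x̂) = 0`. Along any trajectory `|φ|` is multiplied by
`|e^{σt}| = e^{t Re σ} ≥ 1`, so `|φ(x)| ≤ |φ(F t x)| → |φ(x̂)| = 0`. -/

namespace Complex

theorem one_le_norm_exp_mul_ofReal {σ : ℂ} (hσ : 0 ≤ σ.re) {t : ℝ} (ht : 0 ≤ t) :
    1 ≤ ‖exp (σ * t)‖ := by
  rw [norm_exp, re_mul_ofReal]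
  exact Real.one_le_exp (mul_nonneg hσ ht)

theorem eq_zero_of_forall_exp_mul_ofReal_eq_one {σ : ℂ}
    (h : ∀ t : ℝ, 0 ≤ t → exp (σ * t) = 1) : σ = 0 := by
  have hderiv : HasDerivAt (fun t : ℝ => exp (σ * t)) (exp (σ * (1 : ℝ)) * (σ * 1)) 1 :=
    ((hasDerivAt_id (1 : ℝ)).ofReal_comp.const_mul σ).cexp
  have hconst : (fun t : ℝ => exp (σ * t)) =ᶠ[𝓝 1] fun _ => 1 :=
    eventually_of_mem (Ioi_mem_nhds one_pos) fun t ht => h t (le_of_lt ht)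
  have hzero := (hderiv.congr_of_eventuallyEq hconst.symm).unique (hasDerivAt_const (1 : ℝ) (1 : ℂ))
  simpa [exp_ne_zero] using hzero

end Complex

def IsKoopmanEigenfunction {M : Type*} (F : ℝ → M → M) (σ : ℂ) (φ : M → ℂ) : Prop :=
  ∀ t : ℝ, 0 ≤ t → ∀ x : M, φ (F t x) = Complex.exp (σ * t) * φ x

namespace IsKoopmanEigenfunction

variable {M : Type*} {F : ℝ → M → M} {σ : ℂ} {φ : M → ℂ}

theorem eq_zero_of_isFixedPt (hφ : IsKoopmanEigenfunction F σ φ) (hσ : σ ≠ 0) {xh : M}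
    (hfix : ∀ t : ℝ, 0 ≤ t → Function.IsFixedPt (F t) xh) : φ xh = 0 := by
  by_contra hne
  refine hσ (Complex.eq_zero_of_forall_exp_mul_ofReal_eq_one fun t ht => ?_)
  have h := hφ t ht xh
  rw [hfix t ht] at h
  exact (mul_eq_right₀ hne).mp h.symm

theorem norm_le_norm_apply (hφ : IsKoopmanEigenfunction F σ φ) (hσ : 0 ≤ σ.re) {t : ℝ}
    (ht : 0 ≤ t) (x : M) : ‖φ x‖ ≤ ‖φ (F t x)‖ := by
  rw [hφ t ht x, norm_mul]
  exact le_mul_of_one_le_left (norm_nonneg _) (Complex.one_le_norm_exp_mul_ofReal hσ ht)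

theorem norm_le_norm_of_tendsto [TopologicalSpace M] (hφ : IsKoopmanEigenfunction F σ φ)
    (hσ : 0 ≤ σ.re) {x xh : M} (hcont : ContinuousAt φ xh)
    (hx : Tendsto (fun t => F t x) atTop (𝓝 xh)) : ‖φ x‖ ≤ ‖φ xh‖ :=
  ge_of_tendsto (hcont.norm.tendsto.comp hx)
    (eventually_atTop.2 ⟨0, fun _ ht => hφ.norm_le_norm_apply hσ ht x⟩)

end IsKoopmanEigenfunction

/-- Continuous-time form: a continuous Koopman eigenfunction with eigenvalue `σ`
(`Re σ ≥ 0`, `σ ≠ 0`) is constant (equal to `0 = φ(x̂)`) along trajectories in the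
stable manifold of an equilibrium `x̂`. -/
theorem stable_manifold_in_level_set_ct {M : Type*} [TopologicalSpace M]
    (F : ℝ → M → M) (σ : ℂ) (hσre : 0 ≤ σ.re) (hσ : σ ≠ 0)
    (φ : M → ℂ) (hφ : Continuous φ)
    (heig : ∀ t : ℝ, 0 ≤ t → ∀ x : M, φ (F t x) = Complex.exp (σ * t) * φ x)
    (xh : M) (hfix : ∀ t : ℝ, 0 ≤ t → F t xh = xh) (x : M)
    (hx : Tendsto (fun t => F t x) atTop (𝓝 xh)) :
    φ x = φ xh ∧ φ xh = 0 := by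
  have hxh : φ xh = 0 := IsKoopmanEigenfunction.eq_zero_of_isFixedPt heig hσ hfix
  have hnorm : ‖φ x‖ ≤ ‖φ xh‖ :=
    IsKoopmanEigenfunction.norm_le_norm_of_tendsto heig hσre hφ.continuousAt hx
  have hx0 : φ x = 0 := by simpa [hxh] using hnorm
  exact ⟨hx0.trans hxh.symm, hxh⟩
end
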